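/- arXiv:math/0601729 — 2 statements merged into one kernel-verified Lean document; each statement's English description precedes it below -/
import Mathlib

section
/- The identity 1/(2(e^{-1}+1)) = 1/(2(e+1)) + ∑_{k ∈ ℤ} 1/((2k+1)²π² + 1) holds. -/
open Real

/-!
The `2`-periodic extension of `x ↦ cosh (a (x - 1))` from `[0, 2]` is continuous, and its Fourier
coefficients are `a sinh a / (n²π² + a²)`, which are summable; so its Fourier series converges to
it pointwise. Evaluating at `x = 0` (value `cosh a`) and at `x = 1` (value `1`, where the
characters take the value `(-1)ⁿ`) and subtracting isolates the odd coefficients: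
`∑_{k ∈ ℤ} 1 / ((2k+1)²π² + a²) = (cosh a - 1) / (2 a sinh a)`. For `a = 1` the right-hand side is
`(e - 1) / (2 (e + 1)) = 1 / (2 (e⁻¹ + 1)) - 1 / (2 (e + 1))`.
-/

open scoped Complex

theorem integral_fourier_mul_cexp {T : ℝ} (hT : T ≠ 0) (n : ℤ) {c : ℂ}
    (hc : c - 2 * π * Complex.I * n / T ≠ 0) :
    ∫ x in (0 : ℝ)..T, fourier (-n) (x : AddCircle T) * cexp (c * x) =
      (cexp (c * T) - 1) / (c - 2 * π * Complex.I * n / T) := by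
  have integrand (x : ℝ) : fourier (-n) (x : AddCircle T) * cexp (c * x) =
      cexp ((c - 2 * π * Complex.I * n / T) * x) := by
    rw [fourier_coe_apply, ← Complex.exp_add]
    push_cast
    ring_nf
  have period : cexp ((c - 2 * π * Complex.I * n / T) * T) = cexp (c * T) := by
    rw [sub_mul, div_mul_cancel₀ _ (by exact_mod_cast hT), Complex.exp_sub, mul_comm _ (n : ℂ),
      Complex.exp_int_mul_two_pi_mul_I, div_one]
  simp_rw [integrand]
  rw [integral_exp_mul_complex hc, period, Complex.ofReal_zero, mul_zero, Complex.exp_zero]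

noncomputable def coshCoeff (a : ℝ) (n : ℤ) : ℝ := a * sinh a / ((n : ℝ) ^ 2 * π ^ 2 + a ^ 2)

theorem summable_coshCoeff (a : ℝ) : Summable (coshCoeff a) := by
  refine ((summable_one_div_int_pow.2 one_lt_two).mul_left (|a * sinh a| / π ^ 2))
    |>.of_norm_bounded_eventually ?_
  filter_upwards [Filter.eventually_cofinite_ne 0] with n hn
  have hn2 : (0 : ℝ) < (n : ℝ) ^ 2 * π ^ 2 := by positivity
  calc ‖coshCoeff a n‖ = |a * sinh a| / ((n : ℝ) ^ 2 * π ^ 2 + a ^ 2) := by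
        rw [coshCoeff, Real.norm_eq_abs, abs_div,
          abs_of_pos (add_pos_of_pos_of_nonneg hn2 (sq_nonneg a))]
    _ ≤ |a * sinh a| / ((n : ℝ) ^ 2 * π ^ 2) :=
        div_le_div_of_nonneg_left (abs_nonneg _) hn2 (by nlinarith)
    _ = |a * sinh a| / π ^ 2 * (1 / (n : ℝ) ^ 2) := by ring

local instance : Fact ((0 : ℝ) < 2) := ⟨two_pos⟩

noncomputable def periodicCosh (a : ℝ) : C(AddCircle (2 : ℝ), ℂ) where
  toFun := AddCircle.liftIco 2 0 fun x ↦ Complex.cosh (a * (x - 1))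
  continuous_toFun := AddCircle.liftIco_continuous (by norm_num) (by fun_prop)

theorem periodicCosh_coe_apply (a : ℝ) {x : ℝ} (hx : x ∈ Set.Ico 0 2) :
    periodicCosh a x = Complex.cosh (a * (x - 1)) :=
  AddCircle.liftIco_coe_apply (f := fun x : ℝ ↦ Complex.cosh (a * (x - 1))) (by simpa using hx)

theorem fourierCoeff_periodicCosh {a : ℝ} (ha : a ≠ 0) (n : ℤ) :
    fourierCoeff (periodicCosh a) n = coshCoeff a n := by
  have hcosh (x : ℝ) : Complex.cosh (a * (x - 1)) =
      cexp (-a) / 2 * cexp (a * x) + cexp a / 2 * cexp (-a * x) := by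
    rw [Complex.cosh, show (a * (x - 1) : ℂ) = -a + a * x by ring,
      show -(-(a : ℂ) + a * x) = a + -a * x by ring, Complex.exp_add, Complex.exp_add]
    ring
  have hint (c : ℂ) : IntervalIntegrable
      (fun x : ℝ ↦ fourier (-n) (x : AddCircle (2 : ℝ)) * cexp (c * x)) MeasureTheory.volume 0 2 :=
    ((fourier (-n)).continuous.comp (by fun_prop)).mul (by fun_prop) |>.intervalIntegrable _ _
  have hden {c : ℂ} (hre : c.re ≠ 0) : c - π * Complex.I * n ≠ 0 := fun h ↦ hre (by
    simpa using congrArg Complex.re h)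
  have hden' {c : ℂ} (hre : c.re ≠ 0) : c - 2 * π * Complex.I * n / (2 : ℝ) ≠ 0 := by
    convert hden hre using 1; push_cast; ring
  rw [show ⇑(periodicCosh a) = AddCircle.liftIco 2 0 fun x : ℝ ↦ Complex.cosh (a * (x - 1))
      from rfl, fourierCoeff_liftIco_eq, fourierCoeffOn_eq_integral,
    show (0 : ℝ) + 2 - 0 = 2 by norm_num, zero_add]
  simp_rw [hcosh, smul_eq_mul, mul_add, mul_left_comm (fourier _ _)]
  rw [intervalIntegral.integral_add ((hint _).const_mul _) ((hint _).const_mul _),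
    intervalIntegral.integral_const_mul, intervalIntegral.integral_const_mul,
    integral_fourier_mul_cexp two_ne_zero n (hden' (c := a) (by simpa)),
    integral_fourier_mul_cexp two_ne_zero n (hden' (c := -a) (by simpa))]
  have hexp : cexp (a * (2 : ℝ)) = cexp a ^ 2 := by
    rw [← Complex.exp_nat_mul]; push_cast; ring_nf
  have hexp' : cexp (-a * (2 : ℝ)) = (cexp a ^ 2)⁻¹ := by
    rw [← hexp, ← Complex.exp_neg]; ring_nf
  have hD : (π : ℂ) ^ 2 * n ^ 2 + a ^ 2 ≠ 0 := by
    exact_mod_cast (by positivity : (0 : ℝ) < π ^ 2 * n ^ 2 + a ^ 2).ne'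
  have hden₁ := hden (c := a) (by simpa)
  have hden₂ := hden (c := -a) (by simpa)
  rw [hexp, hexp', Complex.real_smul]
  push_cast [coshCoeff, Complex.sinh, Complex.exp_neg]
  field_simp
  linear_combination (-2 * (cexp a ^ 2 - 1) * a * π ^ 2 * n ^ 2) * Complex.I_sq

theorem hasSum_coshCoeff_mul_fourier {a : ℝ} (ha : a ≠ 0) {x : ℝ} (hx : x ∈ Set.Ico 0 2) :
    HasSum (fun n ↦ (coshCoeff a n : ℂ) * fourier n (x : AddCircle (2 : ℝ)))
      (Complex.cosh (a * (x - 1))) := by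
  have hcoeff : fourierCoeff (periodicCosh a) = fun n ↦ (coshCoeff a n : ℂ) :=
    funext (fourierCoeff_periodicCosh ha)
  have := has_pointwise_sum_fourier_series_of_summable
    (hcoeff ▸ Complex.summable_ofReal.2 (summable_coshCoeff a)) x
  rwa [hcoeff, periodicCosh_coe_apply a hx] at this

theorem hasSum_coshCoeff {a : ℝ} (ha : a ≠ 0) : HasSum (coshCoeff a) (cosh a) := by
  have := hasSum_coshCoeff_mul_fourier ha (x := 0) (by norm_num)
  rw [← Complex.hasSum_ofReal]
  simpa using this

theorem hasSum_neg_one_zpow_mul_coshCoeff {a : ℝ} (ha : a ≠ 0) :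
    HasSum (fun n ↦ (-1) ^ n * coshCoeff a n) 1 := by
  have := hasSum_coshCoeff_mul_fourier ha (x := 1) (by norm_num)
  have hfourier (n : ℤ) : fourier n ((1 : ℝ) : AddCircle (2 : ℝ)) = (-1) ^ n := by
    rw [fourier_coe_apply, ← Complex.exp_pi_mul_I, ← Complex.exp_int_mul]
    push_cast; ring_nf
  simp only [hfourier] at this
  rw [← Complex.hasSum_ofReal]
  simpa [mul_comm] using this

theorem HasSum.comp_two_mul_add_one {f : ℤ → ℝ} {s t : ℝ} (hs : HasSum f s)
    (ht : HasSum (fun n ↦ (-1) ^ n * f n) t) : HasSum (fun k ↦ f (2 * k + 1)) ((s - t) / 2) := by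
  have hinj : Function.Injective (fun k : ℤ ↦ 2 * k + 1) := fun _ _ h ↦ by simpa using h
  have heven : ∀ n ∉ Set.range (fun k : ℤ ↦ 2 * k + 1), (f n - (-1) ^ n * f n) / 2 = 0 := by
    intro n hn
    obtain ⟨m, rfl | rfl⟩ := Int.even_or_odd' n
    · simp [(even_two_mul m).neg_one_zpow]
    · exact absurd ⟨m, rfl⟩ hn
  refine ((hinj.hasSum_iff heven).2 ((hs.sub ht).div_const 2)).congr_fun fun k ↦ ?_
  simp [(odd_two_mul_add_one k).neg_one_zpow]

theorem hasSum_one_div_odd_sq_mul_pi_sq_add_sq {a : ℝ} (ha : a ≠ 0) :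
    HasSum (fun k : ℤ ↦ 1 / ((2 * k + 1) ^ 2 * π ^ 2 + a ^ 2))
      ((cosh a - 1) / (2 * a * sinh a)) := by
  have hsinh : a * sinh a ≠ 0 := mul_ne_zero ha (Real.sinh_ne_zero.2 ha)
  rw [mul_assoc, ← div_div]
  refine (((hasSum_coshCoeff ha).comp_two_mul_add_one
    (hasSum_neg_one_zpow_mul_coshCoeff ha)).div_const (a * sinh a)).congr_fun fun k ↦ ?_
  push_cast [coshCoeff]
  field_simp

/-- The identity 1/(2(e^{-1}+1)) = 1/(2(e+1)) + ∑_{k ∈ ℤ} 1/((2k+1)²π² + 1). -/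
theorem stmt_5 :
    1 / (2 * (Real.exp (-1) + 1)) =
      1 / (2 * (Real.exp 1 + 1)) +
        ∑' k : ℤ, 1 / ((2 * (k : ℝ) + 1) ^ 2 * Real.pi ^ 2 + 1) := by
  have hsum := hasSum_one_div_odd_sq_mul_pi_sq_add_sq one_ne_zero
  rw [one_pow] at hsum
  rw [hsum.tsum_eq, cosh_eq, sinh_eq, exp_neg]
  have he : rexp 1 ^ 2 - 1 ≠ 0 := by nlinarith [add_one_lt_exp one_ne_zero]
  field_simp
  ring
end

section
/- On the circle |w - 1| = R with R = 4mπ for a positive integer m, the function g(w) = 1/(w(w-2)(e^{w-1}+1)) satisfies |g(w)| ≤ c/R² for some constant c independent of m. -/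
open Complex Filter Real

/-!
Write `w - 1 = x + iy` with `‖w - 1‖ = R = 4mπ`. The factor `w (w - 2) = (w - 1)² - 1` has norm at
least `R² - 1`. For `e^{w-1} + 1`: if `|x| ≥ 1` then `|e^x - 1| ≥ 1/2` keeps it away from `0`;
if `|x| ≤ 1` then `|y|` lies within `1/R` of the multiple `R` of `2π`, so `cos y ≥ 0`, and then
`|e^{x+iy} + 1|² = e^{2x} + 2e^x cos y + 1 ≥ 1`. Hence `|g(w)| ≤ 4/R²`.
-/

namespace Complex

theorem abs_exp_re_sub_one_le_norm_exp_add_one (z : ℂ) : |Real.exp z.re - 1| ≤ ‖exp z + 1‖ := by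
  simpa [norm_exp] using abs_norm_sub_norm_le (exp z) (-1)

theorem one_le_norm_exp_add_one_of_cos_im_nonneg {z : ℂ} (hz : 0 ≤ Real.cos z.im) :
    1 ≤ ‖exp z + 1‖ := by
  have hsq : ‖exp z + 1‖ ^ 2 = Real.exp z.re ^ 2 + 2 * Real.exp z.re * Real.cos z.im + 1 := by
    rw [Complex.sq_norm, normSq_apply]
    simp only [add_re, add_im, one_re, one_im, exp_re, exp_im]
    linear_combination Real.exp z.re ^ 2 * Real.sin_sq_add_cos_sq z.im
  have hpos : 0 ≤ 2 * Real.exp z.re * Real.cos z.im := by positivity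
  nlinarith [norm_nonneg (exp z + 1)]

theorem cos_im_nonneg_of_norm_eq_two_pi_mul {z : ℂ} {n : ℕ} (hz : ‖z‖ = 2 * π * n)
    (hre : |z.re| ≤ 1) : 0 ≤ Real.cos z.im := by
  set R : ℝ := 2 * π * n
  have hpyth : z.re ^ 2 + z.im ^ 2 = R ^ 2 := by
    rw [← hz, Complex.sq_norm, normSq_apply]; ring
  have hre_sq : z.re ^ 2 ≤ 1 := by rw [← sq_abs]; nlinarith [abs_nonneg z.re]
  have him_le : |z.im| ≤ R := by nlinarith [sq_abs z.im, abs_nonneg z.im, norm_nonneg z]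
  -- `(R - |y|)(R + |y|) = x² ≤ 1`, so `R - |y|` cannot exceed `π / 2 > 1`.
  have him_ge : R - π / 2 ≤ |z.im| := by
    nlinarith [sq_abs z.im, abs_nonneg z.im, Real.pi_gt_three]
  rw [← Real.cos_abs, ← Real.cos_sub_nat_mul_two_pi _ n]
  apply Real.cos_nonneg_of_mem_Icc
  constructor <;> linarith

theorem half_le_norm_exp_add_one_of_norm_eq_two_pi_mul {z : ℂ} {n : ℕ} (hz : ‖z‖ = 2 * π * n) :
    1 / 2 ≤ ‖exp z + 1‖ := by
  rcases le_or_gt |z.re| 1 with hre | hre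
  · exact le_trans (by norm_num) <|
      one_le_norm_exp_add_one_of_cos_im_nonneg (cos_im_nonneg_of_norm_eq_two_pi_mul hz hre)
  refine le_trans ?_ (abs_exp_re_sub_one_le_norm_exp_add_one z)
  have he : 2 ≤ Real.exp 1 := by linarith [Real.add_one_le_exp 1]
  rcases lt_abs.mp hre with hpos | hneg
  · have := Real.exp_le_exp.mpr hpos.le
    rw [abs_of_nonneg] <;> linarith
  · have h : Real.exp z.re * Real.exp 1 ≤ 1 := by
      rw [← Real.exp_add]; exact Real.exp_le_one_iff.mpr (by linarith)
    have := Real.exp_pos z.re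
    rw [abs_of_nonpos] <;> nlinarith

theorem norm_sub_one_sq_sub_one_le_norm_mul_sub_two (w : ℂ) :
    ‖w - 1‖ ^ 2 - 1 ≤ ‖w * (w - 2)‖ := by
  have h : w * (w - 2) = (w - 1) ^ 2 - 1 := by ring
  have := norm_sub_norm_le ((w - 1) ^ 2) 1
  rw [norm_pow, norm_one] at this
  rw [h]; linarith

end Complex

/-- On circles |w - 1| = 4mπ (m a positive integer), g(w) = 1/(w(w-2)(e^{w-1}+1))
satisfies |g(w)| ≤ c/(4mπ)² for a constant c independent of m. -/
theorem stmt_6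
    (g : ℂ → ℂ) (hg : ∀ w, g w = (w * (w - 2) * (Complex.exp (w - 1) + 1))⁻¹) :
    ∃ c : ℝ, 0 < c ∧ ∀ m : ℕ, 0 < m → ∀ w : ℂ,
      ‖w - 1‖ = 4 * m * Real.pi → ‖g w‖ ≤ c / (4 * m * Real.pi) ^ 2 := by
  refine ⟨4, by norm_num, fun m hm w hw => ?_⟩
  set R := 4 * (m : ℝ) * π
  have hR : 2 ≤ R ^ 2 := by
    have : (1 : ℝ) ≤ m := by exact_mod_cast hm
    have : 12 ≤ R := by simp only [R]; nlinarith [Real.pi_gt_three]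
    nlinarith
  have hexp : 1 / 2 ≤ ‖exp (w - 1) + 1‖ :=
    half_le_norm_exp_add_one_of_norm_eq_two_pi_mul (n := 2 * m) (by rw [hw]; push_cast; ring)
  have hpoly : R ^ 2 - 1 ≤ ‖w * (w - 2)‖ := hw ▸ norm_sub_one_sq_sub_one_le_norm_mul_sub_two w
  have hden : R ^ 2 / 4 ≤ ‖w * (w - 2) * (exp (w - 1) + 1)‖ := by
    rw [norm_mul]
    nlinarith [norm_nonneg (w * (w - 2))]
  rw [hg, norm_inv, ← inv_div]
  exact inv_anti₀ (by positivity) hden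
end
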